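/- Let t ≥ 1 be a natural number, n ≥ 1 a natural number, c ≥ 0 a real number, and let a, b ∈ [0,1] be real numbers with 1 − b ≤ 1/t². If |a − b| ≤ √( 2(1 − b)·c / n ), then |a^t − b^t| ≤ √( 2c/n ). In particular, if x ∈ ℝ satisfies F(x) ≥ 1 − 1/t² and the empirical CDF satisfies |F_n(x) − F(x)| ≤ √( 2(1 − F(x))·c / n ), then |F_n(x)^t − F(x)^t| ≤ √( 2c/n ). -/

import Mathlib

/-! On `[-1, 1]` the map `x ↦ x ^ t` is `t`-Lipschitz, so `|a ^ t - b ^ t| ≤ t √((1 - b) y)`,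
and the tail condition `t² (1 - b) ≤ 1` is exactly what absorbs the factor `t` into `√(1 - b)`. -/

open Real

theorem abs_pow_sub_pow_le_mul_abs_sub {α : Type*} [CommRing α] [LinearOrder α] [IsOrderedRing α]
    {a b : α} (ha : |a| ≤ 1) (hb : |b| ≤ 1) (n : ℕ) :
    |a ^ n - b ^ n| ≤ n * |a - b| :=
  calc |a ^ n - b ^ n| ≤ |a - b| * n * max |a| |b| ^ (n - 1) := abs_pow_sub_pow_le a b n
    _ ≤ |a - b| * n * 1 := by gcongr; exact pow_le_one₀ (by positivity) (max_le ha hb)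
    _ = n * |a - b| := by ring

theorem sq_mul_le_one_of_le_one_div_sq {x s : ℝ} (h : s ≤ 1 / x ^ 2) : x ^ 2 * s ≤ 1 := by
  rcases eq_or_ne x 0 with rfl | hx
  · norm_num
  · exact (le_div_iff₀' (by positivity)).mp h

theorem mul_sqrt_mul_le_sqrt {x s : ℝ} (hx : 0 ≤ x) (hs : 0 ≤ s) (h : x ^ 2 * s ≤ 1) (y : ℝ) :
    x * √(s * y) ≤ √y := by
  have hxs : x * √s ≤ 1 := by
    rw [← sqrt_sq hx, ← sqrt_mul (sq_nonneg x)]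
    exact sqrt_le_one.mpr h
  rw [sqrt_mul hs, ← mul_assoc]
  exact mul_le_of_le_one_left (sqrt_nonneg y) hxs

theorem abs_pow_sub_pow_le_sqrt_of_light_tail {a b y : ℝ} {t : ℕ} (ha : |a| ≤ 1) (hb : |b| ≤ 1)
    (htail : 1 - b ≤ 1 / (t : ℝ) ^ 2) (hdev : |a - b| ≤ √((1 - b) * y)) :
    |a ^ t - b ^ t| ≤ √y :=
  calc |a ^ t - b ^ t| ≤ t * |a - b| := abs_pow_sub_pow_le_mul_abs_sub ha hb t
    _ ≤ t * √((1 - b) * y) := by gcongr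
    _ ≤ √y := mul_sqrt_mul_le_sqrt t.cast_nonneg (by linarith [(abs_le.mp hb).2])
        (sq_mul_le_one_of_le_one_div_sq htail) y

theorem pow_deviation_of_light_tail_general
    (t n : ℕ) (c : ℝ) :
    (∀ a ∈ Set.Icc (0 : ℝ) 1, ∀ b ∈ Set.Icc (0 : ℝ) 1,
      1 - b ≤ 1 / (t : ℝ) ^ 2 →
      |a - b| ≤ Real.sqrt (2 * (1 - b) * c / n) →
      |a ^ t - b ^ t| ≤ Real.sqrt (2 * c / n)) ∧
    (∀ F Fn : ℝ → ℝ,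
      (∀ y, F y ∈ Set.Icc (0 : ℝ) 1) → (∀ y, Fn y ∈ Set.Icc (0 : ℝ) 1) →
      ∀ x : ℝ, 1 - 1 / (t : ℝ) ^ 2 ≤ F x →
      |Fn x - F x| ≤ Real.sqrt (2 * (1 - F x) * c / n) →
      |Fn x ^ t - F x ^ t| ≤ Real.sqrt (2 * c / n)) := by
  have abs_le_one {z : ℝ} (hz : z ∈ Set.Icc (0 : ℝ) 1) : |z| ≤ 1 :=
    abs_le.mpr ⟨by linarith [hz.1], hz.2⟩
  have key : ∀ a ∈ Set.Icc (0 : ℝ) 1, ∀ b ∈ Set.Icc (0 : ℝ) 1,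
      1 - b ≤ 1 / (t : ℝ) ^ 2 →
      |a - b| ≤ √(2 * (1 - b) * c / n) →
      |a ^ t - b ^ t| ≤ √(2 * c / n) := by
    intro a ha b hb htail hdev
    rw [show 2 * (1 - b) * c / n = (1 - b) * (2 * c / n) by ring] at hdev
    exact abs_pow_sub_pow_le_sqrt_of_light_tail (abs_le_one ha) (abs_le_one hb) htail hdev
  exact ⟨key, fun F Fn hF hFn x hx hdev => key _ (hFn x) _ (hF x) (by linarith) hdev⟩

/-- Let `t ≥ 1`, `n ≥ 1` be natural numbers and `c ≥ 0` real. For `a, b ∈ [0,1]` with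
`1 - b ≤ 1 / t²`, if `|a - b| ≤ √(2 (1 - b) c / n)` then `|a ^ t - b ^ t| ≤ √(2 c / n)`.
In particular, for a CDF `F` and an empirical CDF `Fₙ` (both with values in `[0,1]`),
if `F x ≥ 1 - 1 / t²` and `|Fₙ x - F x| ≤ √(2 (1 - F x) c / n)`, then
`|Fₙ x ^ t - F x ^ t| ≤ √(2 c / n)`. -/
theorem pow_deviation_of_light_tail
    (t n : ℕ) (ht : 1 ≤ t) (hn : 1 ≤ n) (c : ℝ) (hc : 0 ≤ c) :
    (∀ a ∈ Set.Icc (0 : ℝ) 1, ∀ b ∈ Set.Icc (0 : ℝ) 1,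
      1 - b ≤ 1 / (t : ℝ) ^ 2 →
      |a - b| ≤ Real.sqrt (2 * (1 - b) * c / n) →
      |a ^ t - b ^ t| ≤ Real.sqrt (2 * c / n)) ∧
    (∀ F Fn : ℝ → ℝ,
      (∀ y, F y ∈ Set.Icc (0 : ℝ) 1) → (∀ y, Fn y ∈ Set.Icc (0 : ℝ) 1) →
      ∀ x : ℝ, 1 - 1 / (t : ℝ) ^ 2 ≤ F x →
      |Fn x - F x| ≤ Real.sqrt (2 * (1 - F x) * c / n) →
      |Fn x ^ t - F x ^ t| ≤ Real.sqrt (2 * c / n)) :=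
  pow_deviation_of_light_tail_general t n c
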